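/- Let p ∈ (0,1) be real. There exist x, y ∈ ℕ such that p·(1/12)^x·(1/2)^y + (1−p)·(1/3)^x·(1/18)^y < (1/6)^x·(1/6)^y if and only if p ≠ 1/2. -/

import Mathlib

/-!
With `t = 2 ^ x / 3 ^ y` the inequality reads `p / t + (1 - p) * t < 1`, i.e.
`((1 - p) * t - p) * (t - 1) < 0`: `t` has to lie strictly between `1` and `p / (1 - p)`.
For `p = 1/2` this says `(t - 1) ^ 2 / 2 < 0`. Otherwise such a `t` exists because
`{x log 2 - y log 3 | x y : ℕ}` is dense in `ℝ`: as `log 2 / log 3` is irrational, the group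
generated by `log 2` and `log 3` is dense; its small positive elements must have coefficients of
opposite signs, so up to sign they lie in the monoid, and a submonoid of `ℝ` with elements of both
signs and arbitrarily small nonzero elements is dense.
-/

open Real Set

theorem irrational_log_div_log {m n : ℕ} (hm : 1 < m) (hn : 1 < n) (hmn : m.Coprime n) :
    Irrational (log m / log n) := by
  rintro ⟨q, hq⟩
  have hlogm : 0 < log m := log_pos (by exact_mod_cast hm)
  have hlogn : 0 < log n := log_pos (by exact_mod_cast hn)
  have hq0 : 0 < q := by exact_mod_cast hq ▸ div_pos hlogm hlogn
  obtain ⟨k, hk⟩ := Int.eq_ofNat_of_zero_le (Rat.num_pos.2 hq0).le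
  have hlog : log ((m : ℝ) ^ q.den) = log ((n : ℝ) ^ k) := by
    rw [Rat.cast_def, hk, div_eq_div_iff (by positivity) hlogn.ne'] at hq
    push_cast at hq
    rw [log_pow, log_pow]
    linarith
  have hpow : m ^ q.den = n ^ k := by
    exact_mod_cast log_injOn_pos (by simp; positivity) (by simp; positivity) hlog
  have hcop := hmn.pow q.den k
  rw [← hpow, Nat.coprime_self, pow_eq_one_iff] at hcop
  exact hcop.elim hm.ne' q.den_ne_zero

theorem exists_nat_add_mul_mem_Ioc {s w u : ℝ} (hs : 0 < s) (hwu : w ≤ u) :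
    ∃ k : ℕ, w + k * s ∈ Ioc u (u + s) := by
  refine ⟨⌊(u - w) / s⌋₊ + 1, ?_, ?_⟩
  · have := Nat.lt_floor_add_one ((u - w) / s)
    rw [div_lt_iff₀ hs] at this
    push_cast
    linarith
  · have := Nat.floor_le (div_nonneg (sub_nonneg.2 hwu) hs.le)
    rw [le_div_iff₀ hs] at this
    push_cast
    linarith

theorem AddSubmonoid.dense_of_exists_abs_lt {M : AddSubmonoid ℝ} {a b : ℝ} (ha : a ∈ M)
    (ha0 : 0 < a) (hb : b ∈ M) (hb0 : b < 0)
    (hM : ∀ ε > 0, ∃ s ∈ M, s ≠ 0 ∧ |s| < ε) : Dense (M : Set ℝ) := by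
  refine dense_of_exists_between fun u v huv => ?_
  obtain ⟨s, hsM, hs0, hsuv⟩ := hM (v - u) (sub_pos.2 huv)
  rcases hs0.lt_or_gt with hs | hs
  · obtain ⟨n, hn⟩ := exists_nat_ge (v / a)
    rw [div_le_iff₀ ha0] at hn
    obtain ⟨k, hk⟩ := exists_nat_add_mul_mem_Ioc (neg_pos.2 hs) (_root_.neg_le_neg hn)
    refine ⟨n • a + k • s, add_mem (nsmul_mem ha n) (nsmul_mem hsM k), ?_, ?_⟩ <;>
      simp only [nsmul_eq_mul, mem_Ioc, abs_of_neg hs] at hk hsuv ⊢ <;> linarith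
  · obtain ⟨n, hn⟩ := exists_nat_ge (u / b)
    rw [div_le_iff_of_neg hb0] at hn
    obtain ⟨k, hk⟩ := exists_nat_add_mul_mem_Ioc hs hn
    refine ⟨n • b + k • s, add_mem (nsmul_mem hb n) (nsmul_mem hsM k), ?_, ?_⟩ <;>
      simp only [nsmul_eq_mul, mem_Ioc, abs_of_pos hs] at hk hsuv ⊢ <;> linarith

theorem mem_or_neg_mem_closure_pair_neg {a b g : ℝ} (ha : 0 < a) (hb : 0 < b)
    (hg : g ∈ AddSubgroup.closure {a, b}) (hg0 : 0 < g) (hga : g < a) (hgb : g < b) :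
    g ∈ AddSubmonoid.closure {a, -b} ∨ -g ∈ AddSubmonoid.closure {a, -b} := by
  obtain ⟨m, n, rfl⟩ := AddSubgroup.mem_closure_pair.1 hg
  obtain ⟨i, rfl | rfl⟩ := Int.eq_nat_or_neg m <;>
    obtain ⟨j, rfl | rfl⟩ := Int.eq_nat_or_neg n <;>
    simp only [natCast_zsmul, neg_zsmul, nsmul_eq_mul] at hg0 hga hgb
  · have hi : i = 0 := by
      by_contra hi
      have : (1 : ℝ) ≤ i := by exact_mod_cast Nat.one_le_iff_ne_zero.2 hi
      nlinarith
    have hj : j = 0 := by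
      by_contra hj
      have : (1 : ℝ) ≤ j := by exact_mod_cast Nat.one_le_iff_ne_zero.2 hj
      nlinarith
    simp [hi, hj] at hg0
  · exact .inl ((AddSubmonoid.mem_closure_pair _ _ _).2 ⟨i, j, by simp⟩)
  · exact .inr ((AddSubmonoid.mem_closure_pair _ _ _).2 ⟨i, j, by simp [add_comm]⟩)
  · nlinarith

theorem dense_addSubmonoidClosure_pair_neg {a b : ℝ} (ha : 0 < a) (hb : 0 < b)
    (hab : Irrational (a / b)) : Dense (AddSubmonoid.closure {a, -b} : Set ℝ) := by
  refine AddSubmonoid.dense_of_exists_abs_lt (AddSubmonoid.subset_closure (by simp)) ha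
    (AddSubmonoid.subset_closure (by simp)) (neg_neg_of_pos hb) fun ε hε => ?_
  obtain ⟨g, hgG, hg0, hg⟩ :=
    (dense_addSubgroupClosure_pair_iff.2 hab).exists_between (lt_min hε (lt_min ha hb))
  simp only [lt_min_iff] at hg
  rcases mem_or_neg_mem_closure_pair_neg ha hb hgG hg0 hg.2.1 hg.2.2 with h | h
  · exact ⟨g, h, hg0.ne', by rw [abs_of_pos hg0]; exact hg.1⟩
  · exact ⟨-g, h, by simpa using hg0.ne', by rw [abs_neg, abs_of_pos hg0]; exact hg.1⟩

theorem exists_two_pow_div_three_pow_mem_Ioo {u v : ℝ} (hu : 0 < u) (huv : u < v) :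
    ∃ x y : ℕ, (2 : ℝ) ^ x / 3 ^ y ∈ Ioo u v := by
  have hdense := dense_addSubmonoidClosure_pair_neg (log_pos one_lt_two)
    (log_pos (by norm_num : (1 : ℝ) < 3))
    (by exact_mod_cast irrational_log_div_log one_lt_two (by norm_num : 1 < 3) (by norm_num))
  obtain ⟨z, hzM, hz⟩ := hdense.exists_between (log_lt_log hu huv)
  obtain ⟨x, y, rfl⟩ := (AddSubmonoid.mem_closure_pair _ _ _).1 hzM
  have hexp : exp (x • log 2 + y • -log 3) = (2 : ℝ) ^ x / 3 ^ y := by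
    rw [nsmul_eq_mul, nsmul_eq_mul, exp_add, exp_nat_mul, exp_nat_mul, exp_neg,
      exp_log two_pos, exp_log three_pos, inv_pow, div_eq_mul_inv]
  refine ⟨x, y, hexp ▸ ⟨(log_lt_iff_lt_exp hu).1 hz.1, ?_⟩⟩
  exact (lt_log_iff_exp_lt (hu.trans huv)).1 hz.2

theorem div_add_one_sub_mul_lt_one_iff {p t : ℝ} (ht : 0 < t) :
    p / t + (1 - p) * t < 1 ↔ ((1 - p) * t - p) * (t - 1) < 0 := by
  rw [div_add' _ _ _ ht.ne', div_lt_one ht, ← sub_neg]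
  ring_nf

theorem mixture_lt_sixth_pow_iff (p : ℝ) (x y : ℕ) :
    p * (1/12 : ℝ)^x * (1/2 : ℝ)^y + (1 - p) * (1/3 : ℝ)^x * (1/18 : ℝ)^y
        < (1/6 : ℝ)^x * (1/6 : ℝ)^y ↔
      ((1 - p) * (2 ^ x / 3 ^ y) - p) * (2 ^ x / 3 ^ y - 1) < 0 := by
  have hscale : p * (1/12 : ℝ)^x * (1/2 : ℝ)^y + (1 - p) * (1/3 : ℝ)^x * (1/18 : ℝ)^y =
      (1/6 : ℝ)^x * (1/6 : ℝ)^y * (p / (2 ^ x / 3 ^ y) + (1 - p) * (2 ^ x / 3 ^ y)) := by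
    rw [show (1/2 : ℝ) ^ y = (1/6) ^ y * 3 ^ y by rw [← mul_pow]; norm_num,
      show (1/3 : ℝ) ^ x = (1/6) ^ x * 2 ^ x by rw [← mul_pow]; norm_num,
      show (1/12 : ℝ) ^ x = (1/6) ^ x / 2 ^ x by rw [← div_pow]; norm_num,
      show (1/18 : ℝ) ^ y = (1/6) ^ y / 3 ^ y by rw [← div_pow]; norm_num]
    field_simp
  rw [hscale, mul_lt_iff_lt_one_right (by positivity),
    div_add_one_sub_mul_lt_one_iff (by positivity)]

theorem stmt_15 (p : ℝ) (hp : 0 < p ∧ p < 1) :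
    (∃ x y : ℕ, p * (1/12 : ℝ)^x * (1/2 : ℝ)^y + (1 - p) * (1/3 : ℝ)^x * (1/18 : ℝ)^y
        < (1/6 : ℝ)^x * (1/6 : ℝ)^y) ↔ p ≠ 1/2 := by
  obtain ⟨hp0, hp1⟩ := hp
  simp only [mixture_lt_sixth_pow_iff]
  constructor
  · rintro ⟨x, y, h⟩ rfl
    nlinarith [sq_nonneg ((2 : ℝ) ^ x / 3 ^ y - 1)]
  · intro hp2
    have hq : 0 < p / (1 - p) := div_pos hp0 (sub_pos.2 hp1)
    rcases lt_or_gt_of_ne hp2 with hlt | hgt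
    · obtain ⟨x, y, ht1, ht2⟩ := exists_two_pow_div_three_pow_mem_Ioo hq
        ((div_lt_one (sub_pos.2 hp1)).2 (by linarith))
      rw [div_lt_iff₀' (sub_pos.2 hp1)] at ht1
      exact ⟨x, y, mul_neg_of_pos_of_neg (by linarith) (by linarith)⟩
    · obtain ⟨x, y, ht1, ht2⟩ :=
        exists_two_pow_div_three_pow_mem_Ioo (v := p / (1 - p)) one_pos
          ((one_lt_div (sub_pos.2 hp1)).2 (by linarith))
      rw [lt_div_iff₀' (sub_pos.2 hp1)] at ht2
      exact ⟨x, y, mul_neg_of_neg_of_pos (by linarith) (by linarith)⟩
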